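/- Let d ≥ 1 and let U_d ⊆ {0,1}^d be the configuration consisting of the single vertex (0,...,0) of Q_d. Then λ(U_d,d) ≥ 2/(d+1). -/

import Mathlib

/-
Colour `x ∈ Q_n` by its weight modulo `d + 1`. A sub-`d`-cube whose base point has weight `a`
meets the class of residue `(a + w) % (d + 1)`, `w ≤ d`, exactly in its vertices of weight `w`;
this is a single vertex iff `w = 0` or `w = d`. As `d ≢ 0 (mod d + 1)`, every sub-`d`-cube is
`U_d`-good for two of the `d + 1` classes, so one class makes at least a `2 / (d + 1)` fraction
of them good.

The limit exists because `ex(H,d,n)` is nonincreasing for `n ≥ d`: a sub-`d`-cube of `Q_{n+1}`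
lies in the slice `x_i = b` of `n + 1 - d` of the `2 (n + 1)` slices, so the density of good
sub-`d`-cubes in `Q_{n+1}` is the average of their densities in the slices, each a copy of `Q_n`.
-/

open Filter

namespace CubeDensity

/-- The automorphism of `Q_d` given by permuting coordinates by `σ` and then
complementing the values in the coordinates where `ε` is `true`. -/
def autMap (d : ℕ) (σ : Equiv.Perm (Fin d)) (ε : Fin d → Bool) (v : Fin d → Bool) :
    Fin d → Bool :=
  fun i => xor (v (σ⁻¹ i)) (ε i)

/-- `K` is an exact copy of `H` in `Q_d`: some automorphism of `Q_d` maps `H` onto `K`. -/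
def ExactCopy (d : ℕ) (H K : Set (Fin d → Bool)) : Prop :=
  ∃ σ : Equiv.Perm (Fin d), ∃ ε : Fin d → Bool, autMap d σ ε '' H = K

/-- The vertex of `Q_n` in the sub-`d`-cube with flip coordinates `F` (and fixed values `g`
outside `F`) corresponding to the vertex `u` of `Q_d`, identifying the flip coordinates
with `Fin d` in increasing order. -/
def embed {n d : ℕ} (F : Finset (Fin n)) (hF : F.card = d) (g : Fin n → Bool)
    (u : Fin d → Bool) : Fin n → Bool :=
  fun i => if h : i ∈ F then u ((F.orderIsoOfFin hF).symm ⟨i, h⟩) else g i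

/-- The sub-`d`-cube of `Q_n` with flip coordinates `F` and fixed values `g` outside `F`
is `H`-good for `S`: the configuration induced by `S` on it is an exact copy of `H`. -/
def IsGood {n d : ℕ} (H : Set (Fin d → Bool)) (S : Set (Fin n → Bool))
    (F : Finset (Fin n)) (hF : F.card = d) (g : Fin n → Bool) : Prop :=
  ExactCopy d H {u : Fin d → Bool | embed F hF g u ∈ S}

/-- The number of `H`-good sub-`d`-cubes of `Q_n`, where a sub-`d`-cube is encoded as a
pair `(F, g)` with `F` the `d`-element set of flip coordinates and `g` the fixed values
outside `F` (normalized to be `false` on `F`). -/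
noncomputable def goodCount (d : ℕ) (H : Set (Fin d → Bool)) (n : ℕ)
    (S : Set (Fin n → Bool)) : ℕ :=
  Nat.card {p : Finset (Fin n) × (Fin n → Bool) //
    ∃ hF : p.1.card = d, (∀ i ∈ p.1, p.2 i = false) ∧ IsGood H S p.1 hF p.2}

/-- `g(H,d,n,S)`: the fraction of the `C(n,d) * 2^(n-d)` sub-`d`-cubes of `Q_n` that are
`H`-good for `S`. -/
noncomputable def gFrac (d : ℕ) (H : Set (Fin d → Bool)) (n : ℕ)
    (S : Set (Fin n → Bool)) : ℝ :=
  (goodCount d H n S : ℝ) / ((n.choose d : ℝ) * 2 ^ (n - d))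

/-- `ex(H,d,n)`: the maximum over all `S ⊆ {0,1}^n` of the fraction of `H`-good
sub-`d`-cubes. -/
noncomputable def exD (d : ℕ) (H : Set (Fin d → Bool)) (n : ℕ) : ℝ :=
  ⨆ S : Set (Fin n → Bool), gFrac d H n S

open Finset

variable {n d : ℕ}

def subcubes (n d : ℕ) : Finset (Finset (Fin n) × (Fin n → Bool)) :=
  {p | p.1.card = d ∧ ∀ i ∈ p.1, p.2 i = false}

lemma card_filter_forall_mem_eq_false (F : Finset (Fin n)) :
    #{g : Fin n → Bool | ∀ i ∈ F, g i = false} = 2 ^ (n - #F) := by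
  have : ({g : Fin n → Bool | ∀ i ∈ F, g i = false} : Finset _) =
      Fintype.piFinset fun i => if i ∈ F then {false} else univ := by
    ext g
    simp only [mem_filter, mem_univ, true_and, Fintype.mem_piFinset]
    refine forall_congr' fun i => ?_
    split_ifs <;> simp [*]
  rw [this, Fintype.card_piFinset]
  simp [apply_ite card, prod_ite, filter_notMem_eq_sdiff, ← compl_eq_univ_sdiff, card_compl]

lemma card_subcubes : #(subcubes n d) = n.choose d * 2 ^ (n - d) := by
  have : subcubes n d = (powersetCard d univ ×ˢ univ).filter
      fun p : Finset (Fin n) × (Fin n → Bool) => ∀ i ∈ p.1, p.2 i = false := by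
    ext p; simp [subcubes]
  rw [this, card_filter, sum_product]
  simp_rw [← card_filter, card_filter_forall_mem_eq_false]
  rw [sum_congr rfl fun F hF => by rw [(mem_powersetCard_univ.1 hF)], sum_const,
    card_powersetCard, card_univ, Fintype.card_fin, smul_eq_mul]

open scoped Classical in
noncomputable def goodSubcubes (d : ℕ) (H : Set (Fin d → Bool)) (n : ℕ)
    (S : Set (Fin n → Bool)) : Finset (Finset (Fin n) × (Fin n → Bool)) :=
  {p | ∃ hF : p.1.card = d, (∀ i ∈ p.1, p.2 i = false) ∧ IsGood H S p.1 hF p.2}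

lemma goodCount_eq_card (H : Set (Fin d → Bool)) (S : Set (Fin n → Bool)) :
    goodCount d H n S = #(goodSubcubes d H n S) := by
  classical
  rw [goodCount, goodSubcubes, Nat.card_eq_fintype_card, Fintype.card_subtype]

lemma mem_goodSubcubes {H : Set (Fin d → Bool)} {S : Set (Fin n → Bool)}
    {p : Finset (Fin n) × (Fin n → Bool)} :
    p ∈ goodSubcubes d H n S ↔
      ∃ hF : p.1.card = d, (∀ i ∈ p.1, p.2 i = false) ∧ IsGood H S p.1 hF p.2 := by
  simp only [goodSubcubes, mem_filter, mem_univ, true_and]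

lemma embed_orderEmbOfFin (F : Finset (Fin n)) (hF : #F = d) (g : Fin n → Bool)
    (u : Fin d → Bool) (k : Fin d) : embed F hF g u (F.orderEmbOfFin hF k) = u k := by
  rw [embed, dif_pos (F.orderEmbOfFin_mem hF k)]
  congr 1
  rw [OrderIso.symm_apply_eq]
  exact Subtype.ext (F.coe_orderIsoOfFin_apply hF k).symm

lemma embed_of_notMem {F : Finset (Fin n)} (hF : #F = d) (g : Fin n → Bool)
    (u : Fin d → Bool) {j : Fin n} (hj : j ∉ F) : embed F hF g u j = g j := by
  rw [embed, dif_neg hj]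

section Weight

variable {m : ℕ}

def weight (x : Fin m → Bool) : ℕ := #{i | x i = true}

lemma weight_le (x : Fin m → Bool) : weight x ≤ m :=
  (card_filter_le _ _).trans_eq (card_fin m)

lemma weight_eq_zero_iff {x : Fin m → Bool} : weight x = 0 ↔ x = fun _ => false := by
  simp [weight, funext_iff]

lemma weight_eq_iff {x : Fin m → Bool} : weight x = m ↔ x = fun _ => true := by
  have := card_filter_eq_iff (s := univ) (p := fun i => x i = true)
  rw [card_univ, Fintype.card_fin] at this
  simpa [weight, funext_iff] using this

end Weight

lemma weight_embed {F : Finset (Fin n)} (hF : #F = d) {g : Fin n → Bool}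
    (hg : ∀ i ∈ F, g i = false) (u : Fin d → Bool) :
    weight (embed F hF g u) = weight g + weight u := by
  simp only [weight, card_filter]
  rw [← sum_add_sum_compl F (fun i => if embed F hF g u i = true then 1 else 0),
    ← sum_add_sum_compl F (fun i => if g i = true then 1 else 0)]
  have hF_u : ∑ i ∈ F, (if embed F hF g u i = true then 1 else 0) =
      ∑ k, if u k = true then 1 else 0 := by
    rw [← sum_coe_sort F, ← (F.orderIsoOfFin hF).toEquiv.sum_comp]
    simp [coe_orderIsoOfFin_apply, embed_orderEmbOfFin]
  have hF_g : ∑ i ∈ F, (if g i = true then 1 else 0) = 0 :=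
    sum_eq_zero fun i hi => by simp [hg i hi]
  have hFc : ∑ i ∈ Fᶜ, (if embed F hF g u i = true then 1 else 0) =
      ∑ i ∈ Fᶜ, if g i = true then 1 else 0 :=
    sum_congr rfl fun i hi => by rw [embed_of_notMem hF g u (mem_compl.1 hi)]
  rw [hF_u, hF_g, hFc]
  ring

def layer (n q c : ℕ) : Set (Fin n → Bool) := {x | weight x % q = c}

lemma exactCopy_singleton (v : Fin d → Bool) : ExactCopy d {fun _ => false} {v} :=
  ⟨1, v, by rw [Set.image_singleton, Set.singleton_eq_singleton_iff]; funext; simp [autMap]⟩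

lemma setOf_embed_mem_layer {F : Finset (Fin n)} (hF : #F = d) {g : Fin n → Bool}
    (hg : ∀ i ∈ F, g i = false) {w : ℕ} (hw : w ≤ d) :
    {u | embed F hF g u ∈ layer n (d + 1) ((weight g + w) % (d + 1))} = {u | weight u = w} := by
  ext u
  simp only [layer, Set.mem_ofPred_eq, weight_embed hF hg]
  constructor
  · intro h
    have := Nat.ModEq.add_left_cancel' _ h
    rwa [Nat.ModEq, Nat.mod_eq_of_lt (Nat.lt_succ_of_le (weight_le u)),
      Nat.mod_eq_of_lt (Nat.lt_succ_of_le hw)] at this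
  · rintro rfl
    rfl

lemma isGood_layer {F : Finset (Fin n)} (hF : #F = d) {g : Fin n → Bool}
    (hg : ∀ i ∈ F, g i = false) {w : ℕ} (hw : w = 0 ∨ w = d) :
    IsGood {fun _ => false} (layer n (d + 1) ((weight g + w) % (d + 1))) F hF g := by
  rw [IsGood, setOf_embed_mem_layer hF hg (by omega)]
  rcases hw with rfl | rfl
  · simpa only [weight_eq_zero_iff, Set.ofPred_eq_eq_singleton] using exactCopy_singleton _
  · simpa only [weight_eq_iff, Set.ofPred_eq_eq_singleton] using exactCopy_singleton _

lemma two_mul_card_subcubes_le_sum_goodCount_layer (hd : 1 ≤ d) :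
    2 * #(subcubes n d) ≤
      ∑ c ∈ range (d + 1), goodCount d {fun _ => false} n (layer n (d + 1) c) := by
  let residues (p : Finset (Fin n) × (Fin n → Bool)) : Finset ℕ :=
    {weight p.2 % (d + 1), (weight p.2 + d) % (d + 1)}
  have card_residues (p) : #(residues p) = 2 := by
    refine card_pair fun h => ?_
    have := Nat.ModEq.add_left_cancel' (weight p.2)
      (by rwa [add_zero] : weight p.2 + 0 ≡ weight p.2 + d [MOD d + 1])
    rw [Nat.ModEq, Nat.zero_mod, Nat.mod_eq_of_lt (Nat.lt_succ_self d)] at this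
    omega
  have residues_subset (p) : residues p ⊆ range (d + 1) := by
    simp only [residues, insert_subset_iff, singleton_subset_iff, mem_range]
    exact ⟨Nat.mod_lt _ d.succ_pos, Nat.mod_lt _ d.succ_pos⟩
  calc 2 * #(subcubes n d)
      = ∑ p ∈ subcubes n d,
          #((range (d + 1)).bipartiteAbove (fun p c => c ∈ residues p) p) := by
        simp [bipartiteAbove, filter_mem_eq_inter, inter_eq_right.2 (residues_subset _),
          card_residues, mul_comm]
    _ = ∑ c ∈ range (d + 1), #((subcubes n d).bipartiteBelow (fun p c => c ∈ residues p) c) :=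
        sum_card_bipartiteAbove_eq_sum_card_bipartiteBelow _
    _ ≤ ∑ c ∈ range (d + 1), goodCount d {fun _ => false} n (layer n (d + 1) c) := by
        refine sum_le_sum fun c _ => ?_
        rw [goodCount_eq_card]
        refine card_le_card fun p hp => ?_
        obtain ⟨hp, hc⟩ := mem_filter.1 hp
        obtain ⟨hF, hg⟩ := (mem_filter.1 hp).2
        refine mem_goodSubcubes.2 ⟨hF, hg, ?_⟩
        rcases mem_insert.1 hc with rfl | hc
        · simpa using isGood_layer hF hg (w := 0) (.inl rfl)
        · rw [mem_singleton.1 hc]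
          exact isGood_layer hF hg (.inr rfl)

lemma gFrac_le_exD (H : Set (Fin d → Bool)) (S : Set (Fin n → Bool)) :
    gFrac d H n S ≤ exD d H n :=
  le_ciSup (Set.finite_range _).bddAbove S

lemma two_div_le_exD (hd : 1 ≤ d) (hn : d ≤ n) :
    2 / ((d : ℝ) + 1) ≤ exD d {fun _ => false} n := by
  have htotal : (0 : ℝ) < n.choose d * 2 ^ (n - d) := by
    have := Nat.choose_pos hn
    positivity
  rw [div_le_iff₀ (by positivity)]
  calc (2 : ℝ) = 2 * (n.choose d * 2 ^ (n - d)) / (n.choose d * 2 ^ (n - d)) := by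
        rw [mul_div_assoc, div_self htotal.ne', mul_one]
    _ ≤ (∑ c ∈ range (d + 1), goodCount d {fun _ => false} n (layer n (d + 1) c) : ℕ) /
          (n.choose d * 2 ^ (n - d)) := by
        have := two_mul_card_subcubes_le_sum_goodCount_layer (n := n) hd
        rw [card_subcubes] at this
        gcongr
        exact_mod_cast this
    _ = ∑ c ∈ range (d + 1), gFrac d {fun _ => false} n (layer n (d + 1) c) := by
        rw [Nat.cast_sum, sum_div]
        rfl
    _ ≤ ∑ _c ∈ range (d + 1), exD d {fun _ => false} n :=
        sum_le_sum fun c _ => gFrac_le_exD _ _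
    _ = exD d {fun _ => false} n * (d + 1) := by
        simp [mul_comm]

def slice (S : Set (Fin (n + 1) → Bool)) (i : Fin (n + 1)) (b : Bool) : Set (Fin n → Bool) :=
  {x | i.insertNth b x ∈ S}

lemma orderEmbOfFin_map_succAboveEmb (i : Fin (n + 1)) {F : Finset (Fin n)} (hF : #F = d)
    (h : #(F.map i.succAboveEmb) = d) (k : Fin d) :
    (F.map i.succAboveEmb).orderEmbOfFin h k = i.succAbove (F.orderEmbOfFin hF k) := by
  refine congrFun (orderEmbOfFin_unique h (f := fun k => i.succAbove (F.orderEmbOfFin hF k))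
    (fun k => ?_) ?_).symm k
  · exact mem_map_of_mem _ (F.orderEmbOfFin_mem hF k)
  · exact (Fin.strictMono_succAbove i).comp (F.orderEmbOfFin hF).strictMono

lemma embed_map_succAboveEmb (i : Fin (n + 1)) (b : Bool) {F : Finset (Fin n)} (hF : #F = d)
    (h : #(F.map i.succAboveEmb) = d) (g : Fin n → Bool) (u : Fin d → Bool) :
    embed (F.map i.succAboveEmb) h (i.insertNth b g) u = i.insertNth b (embed F hF g u) := by
  funext j
  rcases Fin.eq_self_or_eq_succAbove i j with rfl | ⟨j, rfl⟩
  · rw [embed_of_notMem h _ _ (by simp), Fin.insertNth_apply_same, Fin.insertNth_apply_same]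
  rw [Fin.insertNth_apply_succAbove]
  by_cases hj : j ∈ F
  · obtain ⟨k, rfl⟩ : j ∈ Set.range (F.orderEmbOfFin hF) := by rwa [range_orderEmbOfFin]
    rw [← orderEmbOfFin_map_succAboveEmb i hF h, embed_orderEmbOfFin, embed_orderEmbOfFin]
  · rw [embed_of_notMem h _ _ (by simpa using hj), embed_of_notMem hF _ _ hj,
      Fin.insertNth_apply_succAbove]

lemma map_succAboveEmb_mem_goodSubcubes_iff (H : Set (Fin d → Bool))
    (S : Set (Fin (n + 1) → Bool)) (i : Fin (n + 1)) (b : Bool) (F : Finset (Fin n))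
    (g : Fin n → Bool) :
    (F.map i.succAboveEmb, i.insertNth b g) ∈ goodSubcubes d H (n + 1) S ↔
      (F, g) ∈ goodSubcubes d H n (slice S i b) := by
  have isGood_iff (hF : #F = d) (h : #(F.map i.succAboveEmb) = d) :
      IsGood H S (F.map i.succAboveEmb) h (i.insertNth b g) ↔ IsGood H (slice S i b) F hF g := by
    simp only [IsGood, embed_map_succAboveEmb i b hF h]
    rfl
  simp only [mem_goodSubcubes, forall_mem_map, Fin.coe_succAboveEmb,
    Fin.insertNth_apply_succAbove]
  constructor
  · rintro ⟨h, hg, hgood⟩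
    have hF : #F = d := by simpa using h
    exact ⟨hF, hg, (isGood_iff hF h).1 hgood⟩
  · rintro ⟨hF, hg, hgood⟩
    have h : #(F.map i.succAboveEmb) = d := by simpa using hF
    exact ⟨h, hg, (isGood_iff hF h).2 hgood⟩

lemma card_goodSubcubes_filter_eq_goodCount_slice (H : Set (Fin d → Bool))
    (S : Set (Fin (n + 1) → Bool)) (i : Fin (n + 1)) (b : Bool) :
    #{p ∈ goodSubcubes d H (n + 1) S | i ∉ p.1 ∧ p.2 i = b} =
      goodCount d H n (slice S i b) := by
  rw [goodCount_eq_card]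
  symm
  refine card_bij (fun p _ => (p.1.map i.succAboveEmb, i.insertNth b p.2)) ?_ ?_ ?_
  · rintro ⟨F, g⟩ hp
    exact mem_filter.2
      ⟨(map_succAboveEmb_mem_goodSubcubes_iff H S i b F g).2 hp, by simp, by simp⟩
  · rintro ⟨F, g⟩ - ⟨F', g'⟩ - h
    simp only [Prod.mk.injEq, Finset.map_inj] at h
    obtain ⟨rfl, h⟩ := h
    simpa using congrArg i.removeNth h
  · rintro ⟨F, g⟩ hp
    obtain ⟨hp, hi, hb⟩ := mem_filter.1 hp
    obtain ⟨F, -, rfl⟩ : ∃ F' ⊆ univ, F = F'.map i.succAboveEmb := by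
      refine subset_map_iff.1 fun j hj => ?_
      obtain ⟨j, rfl⟩ := Fin.exists_succAbove_eq (ne_of_mem_of_not_mem hj hi)
      exact mem_map_of_mem _ (mem_univ j)
    obtain ⟨g, rfl⟩ : ∃ g', g = i.insertNth b g' :=
      ⟨i.removeNth g, by rw [← hb, Fin.insertNth_self_removeNth]⟩
    exact ⟨(F, g), (map_succAboveEmb_mem_goodSubcubes_iff H S i b _ _).1 hp, rfl⟩

lemma goodCount_succ_mul_eq_sum_goodCount_slice (H : Set (Fin d → Bool))
    (S : Set (Fin (n + 1) → Bool)) :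
    goodCount d H (n + 1) S * (n + 1 - d) = ∑ i, ∑ b, goodCount d H n (slice S i b) := by
  simp_rw [← card_goodSubcubes_filter_eq_goodCount_slice, goodCount_eq_card]
  set G := goodSubcubes d H (n + 1) S
  have sum_bool (i : Fin (n + 1)) :
      ∑ b, #{p ∈ G | i ∉ p.1 ∧ p.2 i = b} =
        #(G.bipartiteBelow (fun p i => i ∉ p.1) i) := by
    rw [bipartiteBelow, card_eq_sum_card_fiberwise (f := fun p => p.2 i) (t := univ)
      fun _ _ => mem_univ _]
    simp_rw [filter_filter]
  have card_free (p) (hp : p ∈ G) :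
      #(univ.bipartiteAbove (fun p i => i ∉ p.1) p) = n + 1 - d := by
    obtain ⟨hF, -⟩ := mem_goodSubcubes.1 hp
    rw [bipartiteAbove, filter_notMem_eq_sdiff, ← compl_eq_univ_sdiff, card_compl,
      Fintype.card_fin, hF]
  simp_rw [sum_bool]
  rw [← sum_card_bipartiteAbove_eq_sum_card_bipartiteBelow, sum_congr rfl card_free, sum_const,
    smul_eq_mul]

lemma exD_succ_le (H : Set (Fin d → Bool)) (hn : d ≤ n) : exD d H (n + 1) ≤ exD d H n := by
  have hpos (m : ℕ) (hm : d ≤ m) : (0 : ℝ) < m.choose d * 2 ^ (m - d) := by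
    have := Nat.choose_pos hm
    positivity
  have hchoose : ((n + 1).choose d : ℝ) * (n + 1 - d : ℕ) = (n + 1) * n.choose d := by
    exact_mod_cast ((Nat.choose_mul_succ_eq n d).symm.trans (mul_comm _ _))
  have hpow : (2 : ℝ) ^ (n + 1 - d) = 2 * 2 ^ (n - d) := by
    rw [Nat.sub_add_comm hn, pow_succ, mul_comm]
  refine ciSup_le fun S => ?_
  rw [gFrac, div_le_iff₀ (hpos _ (by omega)), ← mul_le_mul_iff_of_pos_right
    (by exact_mod_cast Nat.sub_pos_of_lt (Nat.lt_succ_of_le hn) : (0 : ℝ) < (n + 1 - d : ℕ))]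
  calc (goodCount d H (n + 1) S : ℝ) * (n + 1 - d : ℕ)
      = ∑ i, ∑ b, (goodCount d H n (slice S i b) : ℝ) := by
        exact_mod_cast goodCount_succ_mul_eq_sum_goodCount_slice H S
    _ ≤ ∑ _i : Fin (n + 1), ∑ _b : Bool, exD d H n * (n.choose d * 2 ^ (n - d)) := by
        gcongr with i _ b _
        rw [← div_le_iff₀ (hpos n hn)]
        exact gFrac_le_exD H _
    _ = exD d H n * ((n + 1).choose d * 2 ^ (n + 1 - d)) * (n + 1 - d : ℕ) := by
        simp only [sum_const, card_univ, Fintype.card_fin, Fintype.card_bool, nsmul_eq_mul, hpow]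
        push_cast
        linear_combination -(2 * exD d H n * 2 ^ (n - d)) * hchoose

lemma exD_nonneg (H : Set (Fin d → Bool)) : 0 ≤ exD d H n :=
  (div_nonneg (Nat.cast_nonneg _) (by positivity)).trans (gFrac_le_exD H ∅)

lemma tendsto_exD (H : Set (Fin d → Bool)) :
    Tendsto (exD d H) atTop (nhds (⨅ k, exD d H (k + d))) := by
  refine (tendsto_add_atTop_iff_nat d).1 (tendsto_atTop_ciInf ?_ ⟨0, ?_⟩)
  · refine antitone_nat_of_succ_le fun k => ?_
    simpa only [Nat.add_right_comm] using exD_succ_le H (Nat.le_add_left d k)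
  · rintro _ ⟨k, rfl⟩
    exact exD_nonneg H

end CubeDensity

/-- λ(U_d, d) ≥ 2/(d+1), where U_d is a single vertex of Q_d. -/
theorem dCubeDensity_single_vertex_ge_layered (d : ℕ) (hd : 1 ≤ d) :
    ∃ L : ℝ,
      Filter.Tendsto
        (fun n => CubeDensity.exD d ({fun _ => false} : Set (Fin d → Bool)) n)
        Filter.atTop (nhds L) ∧
      2 / ((d : ℝ) + 1) ≤ L :=
  ⟨_, CubeDensity.tendsto_exD _,
    le_ciInf fun k => CubeDensity.two_div_le_exD hd (Nat.le_add_left d k)⟩
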